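/- arXiv:2601.08400 — 7 statements merged into one kernel-verified Lean document; each statement's English description precedes it below -/
import Mathlib

section
/- Let N be a positive integer, κ₁ > 0 and κ₂ ∈ (−1/2, 1/2) real parameters, and let κ be the near-axis curvature model. Then κ(0) = 0, κ(π/N) = 0, κ(ℓ) > 0 for every ℓ ∈ (0, π/N), and κ has exactly one critical point ℓ* in the open interval (0, π/N); this ℓ* is the unique point of (the compact interval) [0, π/N] at which κ attains its maximum over [0, π/N]. -/
/-!
With `u = cos (Nℓ/2)`, which decreases from 1 to 0 on `[0, π/N]`, the curvature is the polynomial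
`2κ₁(1 - u²)u³(1 + 2κ₂(2u² - 1))`, whose derivative is `2κ₁u² Q(u²)` for a quadratic `Q` with
`Q 0 = 3(1 - 2κ₂) > 0 > -2(1 + 2κ₂) = Q 1`. A quadratic changing sign on `[0, 1]` has only one
root in `(0, 1)`, so κ has at most one critical point in `(0, π/N)`. A maximizer over `[0, π/N]`
exists by compactness; it is interior because κ vanishes at the endpoints and is positive inside,
hence it is that critical point.
-/

open Real Set

theorem eq_of_quadratic_eq_zero_of_mem_Ioo {a b c r s : ℝ} (hsign : c * (a + b + c) < 0)
    (hr : r ∈ Ioo (0 : ℝ) 1) (hs : s ∈ Ioo (0 : ℝ) 1)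
    (hr0 : a * r ^ 2 + b * r + c = 0) (hs0 : a * s ^ 2 + b * s + c = 0) : r = s := by
  by_contra hne
  have hsum : a * (r + s) + b = 0 :=
    mul_left_cancel₀ (sub_ne_zero.mpr hne) (by linear_combination hr0 - hs0)
  have hprod : c * (a + b + c) = a ^ 2 * (r * s * ((1 - r) * (1 - s))) := by
    have hc : c = a * r * s := by linear_combination hr0 - r * hsum
    rw [show a + b + c = a * (1 - r) * (1 - s) by linear_combination hsum + hc, hc]
    ring
  have : 0 ≤ a ^ 2 * (r * s * ((1 - r) * (1 - s))) :=
    mul_nonneg (sq_nonneg a) (mul_nonneg (mul_nonneg hr.1.le hs.1.le)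
      (mul_nonneg (sub_nonneg.mpr hr.2.le) (sub_nonneg.mpr hs.2.le)))
  linarith

theorem mem_Ioo_and_deriv_eq_zero_of_isMaxOn_Icc {f : ℝ → ℝ} {a b x : ℝ} (hab : a < b)
    (hfa : f a = 0) (hfb : f b = 0) (hpos : ∀ y ∈ Ioo a b, 0 < f y)
    (hx : x ∈ Icc a b) (hmax : IsMaxOn f (Icc a b) x) : x ∈ Ioo a b ∧ deriv f x = 0 := by
  have hmid : (a + b) / 2 ∈ Ioo a b := ⟨by linarith, by linarith⟩
  have hfx : 0 < f x := (hpos _ hmid).trans_le (hmax ⟨hmid.1.le, hmid.2.le⟩)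
  have hxIoo : x ∈ Ioo a b :=
    ⟨hx.1.lt_of_ne (by rintro rfl; linarith), hx.2.lt_of_ne (by rintro rfl; linarith)⟩
  exact ⟨hxIoo, (hmax.isLocalMax (Icc_mem_nhds hxIoo.1 hxIoo.2)).deriv_eq_zero⟩

theorem injOn_cos_sq : InjOn (fun θ ↦ cos θ ^ 2) (Icc 0 (π / 2)) := fun θ hθ θ' hθ' h ↦ by
  have hπ : π / 2 ≤ π := by linarith [pi_pos]
  refine injOn_cos ⟨hθ.1, hθ.2.trans hπ⟩ ⟨hθ'.1, hθ'.2.trans hπ⟩ ?_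
  exact (pow_left_inj₀ (cos_nonneg_of_mem_Icc ⟨by linarith [hθ.1], hθ.2⟩)
    (cos_nonneg_of_mem_Icc ⟨by linarith [hθ'.1], hθ'.2⟩) two_ne_zero).mp h

theorem mul_div_two_mem_Ioo {n ℓ : ℝ} (hn : 0 < n) (hℓ : ℓ ∈ Ioo 0 (π / n)) :
    n * ℓ / 2 ∈ Ioo 0 (π / 2) := by
  have := (lt_div_iff₀' hn).mp hℓ.2
  exact ⟨by have := hℓ.1; positivity, by linarith⟩

theorem sin_pos_and_cos_pos_of_mem_Ioo {n ℓ : ℝ} (hn : 0 < n) (hℓ : ℓ ∈ Ioo 0 (π / n)) :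
    0 < sin (n * ℓ / 2) ∧ 0 < cos (n * ℓ / 2) :=
  have hθ := mul_div_two_mem_Ioo hn hℓ
  ⟨sin_pos_of_mem_Ioo ⟨hθ.1, by linarith [hθ.2, pi_pos]⟩,
    cos_pos_of_mem_Ioo ⟨by linarith [hθ.1, pi_pos], hθ.2⟩⟩

theorem one_add_two_mul_mul_cos_pos {k : ℝ} (hk : k ∈ Ioo (-(1 / 2) : ℝ) (1 / 2)) (x : ℝ) :
    0 < 1 + 2 * k * cos x := by
  have : |k * cos x| ≤ |k| := by
    rw [abs_mul]; exact mul_le_of_le_one_right (abs_nonneg k) (abs_cos_le_one x)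
  linarith [neg_abs_le (k * cos x), abs_lt.mpr hk]

noncomputable def curvaturePoly (κ₁ κ₂ u : ℝ) : ℝ :=
  2 * κ₁ * (1 - u ^ 2) * u ^ 3 * (1 + 2 * κ₂ * (2 * u ^ 2 - 1))

noncomputable def criticalQuadratic (κ₂ v : ℝ) : ℝ :=
  -28 * κ₂ * v ^ 2 + (30 * κ₂ - 5) * v + 3 * (1 - 2 * κ₂)

theorem hasDerivAt_curvaturePoly (κ₁ κ₂ u : ℝ) :
    HasDerivAt (curvaturePoly κ₁ κ₂) (2 * κ₁ * u ^ 2 * criticalQuadratic κ₂ (u ^ 2)) u := by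
  have hsq := hasDerivAt_pow 2 u
  have hfac := (((hsq.const_sub 1).const_mul (2 * κ₁)).mul (hasDerivAt_pow 3 u)).mul
    (((hsq.const_mul 2).sub_const 1).const_mul (2 * κ₂) |>.const_add 1)
  refine hfac.congr_deriv ?_
  simp only [Pi.mul_apply, criticalQuadratic]; push_cast; ring

theorem eq_of_criticalQuadratic_eq_zero {κ₂ v w : ℝ} (hκ₂ : κ₂ ∈ Ioo (-(1 / 2) : ℝ) (1 / 2))
    (hv : v ∈ Ioo (0 : ℝ) 1) (hw : w ∈ Ioo (0 : ℝ) 1)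
    (hv0 : criticalQuadratic κ₂ v = 0) (hw0 : criticalQuadratic κ₂ w = 0) : v = w :=
  eq_of_quadratic_eq_zero_of_mem_Ioo (by nlinarith [hκ₂.1, hκ₂.2]) hv hw hv0 hw0

noncomputable def nearAxisCurvature (n κ₁ κ₂ ℓ : ℝ) : ℝ :=
  2 * κ₁ * sin (n * ℓ / 2) ^ 2 * cos (n * ℓ / 2) ^ 3 * (1 + 2 * κ₂ * cos (n * ℓ))

section nearAxisCurvature

variable (n κ₁ κ₂ : ℝ)

theorem nearAxisCurvature_eq_curvaturePoly :
    nearAxisCurvature n κ₁ κ₂ = fun ℓ ↦ curvaturePoly κ₁ κ₂ (cos (n * ℓ / 2)) := by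
  ext ℓ
  have hcos : cos (n * ℓ) = 2 * cos (n * ℓ / 2) ^ 2 - 1 := by
    rw [← cos_two_mul]; ring_nf
  rw [nearAxisCurvature, curvaturePoly, hcos, sin_sq]

theorem nearAxisCurvature_zero : nearAxisCurvature n κ₁ κ₂ 0 = 0 := by
  simp [nearAxisCurvature]

theorem nearAxisCurvature_pi_div (hn : n ≠ 0) : nearAxisCurvature n κ₁ κ₂ (π / n) = 0 := by
  simp [nearAxisCurvature, mul_div_cancel₀ π hn]

theorem continuous_nearAxisCurvature : Continuous (nearAxisCurvature n κ₁ κ₂) := by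
  unfold nearAxisCurvature; fun_prop

theorem hasDerivAt_nearAxisCurvature (ℓ : ℝ) :
    HasDerivAt (nearAxisCurvature n κ₁ κ₂)
      (2 * κ₁ * cos (n * ℓ / 2) ^ 2 * criticalQuadratic κ₂ (cos (n * ℓ / 2) ^ 2) *
        (-sin (n * ℓ / 2) * (n / 2))) ℓ := by
  rw [nearAxisCurvature_eq_curvaturePoly]
  have hlin : HasDerivAt (fun ℓ ↦ n * ℓ / 2) (n / 2) ℓ := by
    simpa using ((hasDerivAt_id ℓ).const_mul n).div_const 2
  exact (hasDerivAt_curvaturePoly κ₁ κ₂ _).comp ℓ hlin.cos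

variable {n κ₁ κ₂}

theorem nearAxisCurvature_pos (hn : 0 < n) (hκ₁ : 0 < κ₁) (hκ₂ : κ₂ ∈ Ioo (-(1 / 2) : ℝ) (1 / 2))
    {ℓ : ℝ} (hℓ : ℓ ∈ Ioo 0 (π / n)) : 0 < nearAxisCurvature n κ₁ κ₂ ℓ := by
  obtain ⟨hsin, hcos⟩ := sin_pos_and_cos_pos_of_mem_Ioo hn hℓ
  have := one_add_two_mul_mul_cos_pos hκ₂ (n * ℓ)
  unfold nearAxisCurvature; positivity

theorem deriv_nearAxisCurvature_eq_zero_iff (hn : 0 < n) (hκ₁ : κ₁ ≠ 0) {ℓ : ℝ}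
    (hℓ : ℓ ∈ Ioo 0 (π / n)) :
    deriv (nearAxisCurvature n κ₁ κ₂) ℓ = 0 ↔ criticalQuadratic κ₂ (cos (n * ℓ / 2) ^ 2) = 0 := by
  obtain ⟨hsin, hcos⟩ := sin_pos_and_cos_pos_of_mem_Ioo hn hℓ
  rw [(hasDerivAt_nearAxisCurvature n κ₁ κ₂ ℓ).deriv]
  simp [hκ₁, hsin.ne', hcos.ne', hn.ne']

theorem eq_of_deriv_nearAxisCurvature_eq_zero (hn : 0 < n) (hκ₁ : κ₁ ≠ 0)
    (hκ₂ : κ₂ ∈ Ioo (-(1 / 2) : ℝ) (1 / 2)) {ℓ ℓ' : ℝ}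
    (hℓ : ℓ ∈ Ioo 0 (π / n)) (hℓ' : ℓ' ∈ Ioo 0 (π / n))
    (hd : deriv (nearAxisCurvature n κ₁ κ₂) ℓ = 0)
    (hd' : deriv (nearAxisCurvature n κ₁ κ₂) ℓ' = 0) :
    ℓ = ℓ' := by
  have cos_sq_mem : ∀ x ∈ Ioo 0 (π / n), cos (n * x / 2) ^ 2 ∈ Ioo (0 : ℝ) 1 := fun x hx ↦ by
    obtain ⟨hsin, hcos⟩ := sin_pos_and_cos_pos_of_mem_Ioo hn hx
    exact ⟨by positivity, by nlinarith [sin_sq_add_cos_sq (n * x / 2)]⟩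
  have hsq := eq_of_criticalQuadratic_eq_zero hκ₂ (cos_sq_mem ℓ hℓ) (cos_sq_mem ℓ' hℓ')
    ((deriv_nearAxisCurvature_eq_zero_iff hn hκ₁ hℓ).mp hd)
    ((deriv_nearAxisCurvature_eq_zero_iff hn hκ₁ hℓ').mp hd')
  have hθ := Ioo_subset_Icc_self (mul_div_two_mem_Ioo hn hℓ)
  have hθ' := Ioo_subset_Icc_self (mul_div_two_mem_Ioo hn hℓ')
  simpa [hn.ne'] using injOn_cos_sq hθ hθ' hsq

end nearAxisCurvature

/-- For the near-axis curvature model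
`κ(ℓ) = 2κ₁ sin²(Nℓ/2) cos³(Nℓ/2) (1 + 2κ₂ cos(Nℓ))` with `N` a positive integer,
`κ₁ > 0`, `κ₂ ∈ (−1/2, 1/2)`: κ vanishes at 0 and π/N, is positive on (0, π/N),
and has exactly one critical point ℓ* in (0, π/N), which is the unique point of
[0, π/N] where κ attains its maximum over [0, π/N]. -/
theorem near_axis_curvature_single_max
    (N : ℕ) (hN : 0 < N) (κ₁ κ₂ : ℝ) (hκ₁ : 0 < κ₁)
    (hκ₂ : κ₂ ∈ Set.Ioo (-(1/2) : ℝ) (1/2))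
    (κ : ℝ → ℝ)
    (hκ : ∀ ℓ : ℝ, κ ℓ =
      2 * κ₁ * Real.sin ((N : ℝ) * ℓ / 2) ^ 2 * Real.cos ((N : ℝ) * ℓ / 2) ^ 3 *
        (1 + 2 * κ₂ * Real.cos ((N : ℝ) * ℓ))) :
    κ 0 = 0 ∧ κ (π / (N : ℝ)) = 0 ∧
    (∀ ℓ ∈ Set.Ioo (0 : ℝ) (π / (N : ℝ)), 0 < κ ℓ) ∧
    ∃ ℓs ∈ Set.Ioo (0 : ℝ) (π / (N : ℝ)),
      deriv κ ℓs = 0 ∧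
      (∀ ℓ ∈ Set.Ioo (0 : ℝ) (π / (N : ℝ)), deriv κ ℓ = 0 → ℓ = ℓs) ∧
      IsMaxOn κ (Set.Icc (0 : ℝ) (π / (N : ℝ))) ℓs ∧
      (∀ ℓ ∈ Set.Icc (0 : ℝ) (π / (N : ℝ)),
        IsMaxOn κ (Set.Icc (0 : ℝ) (π / (N : ℝ))) ℓ → ℓ = ℓs) := by
  obtain rfl : κ = nearAxisCurvature N κ₁ κ₂ := funext hκ
  have hn : (0 : ℝ) < N := Nat.cast_pos.mpr hN
  have h0 := nearAxisCurvature_zero (N : ℝ) κ₁ κ₂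
  have hπ := nearAxisCurvature_pi_div _ κ₁ κ₂ hn.ne'
  have hpos := fun ℓ (hℓ : ℓ ∈ Ioo 0 (π / N)) ↦ nearAxisCurvature_pos hn hκ₁ hκ₂ hℓ
  have hmax_crit := fun ℓ ↦
    mem_Ioo_and_deriv_eq_zero_of_isMaxOn_Icc (x := ℓ) (div_pos pi_pos hn) h0 hπ hpos
  obtain ⟨ℓs, hℓs, hmax⟩ := isCompact_Icc.exists_isMaxOn
    (nonempty_Icc.mpr (div_pos pi_pos hn).le) (continuous_nearAxisCurvature _ κ₁ κ₂).continuousOn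
  obtain ⟨hℓsIoo, hds⟩ := hmax_crit ℓs hℓs hmax
  have huniq : ∀ ℓ ∈ Ioo 0 (π / N), deriv (nearAxisCurvature N κ₁ κ₂) ℓ = 0 → ℓ = ℓs :=
    fun ℓ hℓ hd ↦ eq_of_deriv_nearAxisCurvature_eq_zero hn hκ₁.ne' hκ₂ hℓ hℓsIoo hd hds
  refine ⟨h0, hπ, hpos, ℓs, hℓsIoo, hds, huniq, hmax, fun ℓ hℓ hmaxℓ ↦ ?_⟩
  obtain ⟨hℓIoo, hd⟩ := hmax_crit ℓ hℓ hmaxℓ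
  exact huniq ℓ hℓIoo hd
end

section
/- Define g : (−1/2, 1/2) → ℝ by g(κ₂) = (−5 + 30κ₂ + √(25 + 36κ₂ + 228κ₂²)) / (56κ₂) for κ₂ ≠ 0 and g(0) = 3/5. Then g is continuous and strictly increasing on (−1/2, 1/2), and 3/7 < g(κ₂) < 5/7 for every κ₂ ∈ (−1/2, 1/2). Consequently, for fixed positive integer N and κ₁ > 0, the unique critical point ℓ*(κ₂) ∈ (0, π/N) of the near-axis curvature model, characterized by cos²(N ℓ*(κ₂)/2) = g(κ₂), is a strictly decreasing function of κ₂ on (−1/2, 1/2). -/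
/-!
With `y = cos² (N ℓ / 2)`, the equation `κ'(ℓ) = 0` is linear in `κ₂` and reads
`κ₂ = (5y - 3) / (30y - 28y² - 6)`. Clearing denominators, `g(κ₂)` is the root of the
resulting quadratic in `y` that lies in `(3/7, 5/7)`; after rationalizing,
`g(κ₂) = 6(1 - 2κ₂) / (√… + 5 - 30κ₂)`, which is visibly continuous through `κ₂ = 0`.
On `(3/7, 5/7)` the rational function above is strictly increasing, so its inverse `g` is
too, and since `cos²` is strictly decreasing on `(0, π/2)`, `ℓ*` is strictly decreasing.
-/

open Real Set

section CompMono

variable {α β γ : Type*} [LinearOrder α] [LinearOrder β] [LinearOrder γ]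
  {f : β → γ} {g : α → β} {s : Set α} {t : Set β}

theorem StrictMonoOn.strictMonoOn_of_comp (hf : StrictMonoOn f t) (hg : MapsTo g s t)
    (hfg : StrictMonoOn (f ∘ g) s) : StrictMonoOn g s := fun _ ha _ hb hab =>
  (hf.lt_iff_lt (hg ha) (hg hb)).mp (hfg ha hb hab)

theorem StrictAntiOn.strictAntiOn_of_comp (hf : StrictAntiOn f t) (hg : MapsTo g s t)
    (hfg : StrictMonoOn (f ∘ g) s) : StrictAntiOn g s := fun _ ha _ hb hab =>
  (hf.lt_iff_gt (hg ha) (hg hb)).mp (hfg ha hb hab)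

end CompMono

/-- The critical-point equation `κ'(ℓ) = 0` solved for `κ₂`, in terms of `y = cos² (N ℓ / 2)`. -/
noncomputable def kappa2OfCosSq (y : ℝ) : ℝ := (5 * y - 3) / (30 * y - 28 * y ^ 2 - 6)

noncomputable def cosSqOfKappa2 (x : ℝ) : ℝ :=
  6 * (1 - 2 * x) / (√(25 + 36 * x + 228 * x ^ 2) + 5 - 30 * x)

theorem sq_sqrt_disc (x : ℝ) : √(25 + 36 * x + 228 * x ^ 2) ^ 2 = 25 + 36 * x + 228 * x ^ 2 :=
  sq_sqrt (by nlinarith [sq_nonneg (38 * x + 3)])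

theorem sqrt_disc_add_pos {x : ℝ} (hx : x < 1 / 2) :
    0 < √(25 + 36 * x + 228 * x ^ 2) + 5 - 30 * x := by
  have hs := sq_sqrt_disc x
  have hs0 := sqrt_nonneg (25 + 36 * x + 228 * x ^ 2)
  by_contra! h
  nlinarith [mul_self_le_mul_self hs0 (show _ ≤ 30 * x - 5 by linarith)]

theorem cosSqOfKappa2_zero : cosSqOfKappa2 0 = 3 / 5 := by
  have h : √25 = 5 := by rw [show (25 : ℝ) = 5 ^ 2 by norm_num, sqrt_sq (by norm_num)]
  norm_num [cosSqOfKappa2, h]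

theorem cosSqOfKappa2_eq {x : ℝ} (hx : x < 1 / 2) (hx0 : x ≠ 0) :
    cosSqOfKappa2 x = (-5 + 30 * x + √(25 + 36 * x + 228 * x ^ 2)) / (56 * x) := by
  rw [cosSqOfKappa2, div_eq_div_iff (sqrt_disc_add_pos hx).ne' (by positivity)]
  linear_combination -sq_sqrt_disc x

theorem continuousOn_cosSqOfKappa2 : ContinuousOn cosSqOfKappa2 (Iio (1 / 2)) :=
  ContinuousOn.div (by fun_prop) (by fun_prop) fun _ hx => (sqrt_disc_add_pos hx).ne'

theorem cosSqOfKappa2_mem_Ioo {x : ℝ} (hx : x ∈ Ioo (-(1 / 2)) (1 / 2)) :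
    cosSqOfKappa2 x ∈ Ioo (3 / 7) (5 / 7) := by
  obtain ⟨hx₁, hx₂⟩ := hx
  have hs := sq_sqrt_disc x
  have hs0 := sqrt_nonneg (25 + 36 * x + 228 * x ^ 2)
  have ht := sqrt_disc_add_pos hx₂
  set s := √(25 + 36 * x + 228 * x ^ 2)
  have hlt : s < 9 + 2 * x := by
    by_contra! h
    nlinarith [mul_self_le_mul_self (by linarith) h]
  have hgt : 17 + 66 * x < 5 * s := by
    by_contra! h
    nlinarith [mul_self_le_mul_self (by positivity) h, mul_pos (sub_pos.2 hx₂) (sub_pos.2 hx₂)]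
  rw [cosSqOfKappa2, mem_Ioo, lt_div_iff₀ ht, div_lt_iff₀ ht]
  constructor <;> linarith

theorem kappa2OfCosSq_cosSqOfKappa2 {x : ℝ} (hx : x ∈ Ioo (-(1 / 2)) (1 / 2)) :
    kappa2OfCosSq (cosSqOfKappa2 x) = x := by
  obtain ⟨hy₁, hy₂⟩ := cosSqOfKappa2_mem_Ioo hx
  have ht := sqrt_disc_add_pos hx.2
  have hs := sq_sqrt_disc x
  set s := √(25 + 36 * x + 228 * x ^ 2)
  set y := cosSqOfKappa2 x
  have hy : y * (s + 5 - 30 * x) = 6 * (1 - 2 * x) := div_mul_cancel₀ _ ht.ne'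
  have hden : 0 < 30 * y - 28 * y ^ 2 - 6 := by nlinarith
  rw [kappa2OfCosSq, div_eq_iff hden.ne']
  -- squaring `y s = 6 - 12x - 5y + 30xy` leaves this factor times the desired identity
  have h : 12 * (1 - 2 * x) * (5 * y - 3 - x * (30 * y - 28 * y ^ 2 - 6)) = 0 := by
    linear_combination (y * s + (6 - 12 * x - 5 * y + 30 * y * x)) * hy - y ^ 2 * hs
  rcases mul_eq_zero.mp h with h | h
  · linarith [hx.2]
  · linarith

theorem strictMonoOn_kappa2OfCosSq : StrictMonoOn kappa2OfCosSq (Ioo (3 / 7) (5 / 7)) := by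
  rintro u ⟨hu₁, hu₂⟩ v ⟨hv₁, hv₂⟩ huv
  rw [kappa2OfCosSq, kappa2OfCosSq, div_lt_div_iff₀ (by nlinarith) (by nlinarith)]
  have hkey : 0 < 140 * u * v - 84 * (u + v) + 60 := by
    nlinarith [mul_pos (sub_pos.2 hu₂) (show (0 : ℝ) < 1 - v by linarith),
      mul_pos (sub_pos.2 hu₁) (show (0 : ℝ) < v by linarith)]
  nlinarith [mul_pos (sub_pos.2 huv) hkey]

theorem strictMonoOn_cosSqOfKappa2 : StrictMonoOn cosSqOfKappa2 (Ioo (-(1 / 2)) (1 / 2)) :=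
  strictMonoOn_kappa2OfCosSq.strictMonoOn_of_comp (fun _ hx => cosSqOfKappa2_mem_Ioo hx)
    (strictMonoOn_id.congr fun _ hx => (kappa2OfCosSq_cosSqOfKappa2 hx).symm)

theorem strictAntiOn_cos_sq : StrictAntiOn (fun θ => cos θ ^ 2) (Icc 0 (π / 2)) :=
  fun a ha b hb hab =>
    pow_lt_pow_left₀
      (strictAntiOn_cos ⟨ha.1, by linarith [ha.2, pi_pos]⟩
        ⟨hb.1, by linarith [hb.2, pi_pos]⟩ hab)
      (cos_nonneg_of_mem_Icc ⟨by linarith [hb.1, pi_pos], hb.2⟩) two_ne_zero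

theorem strictAntiOn_cos_mul_div_two_sq {N : ℝ} (hN : 0 < N) :
    StrictAntiOn (fun ℓ => cos (N * ℓ / 2) ^ 2) (Ioo 0 (π / N)) := by
  have hmaps : MapsTo (fun ℓ => N * ℓ / 2) (Ioo 0 (π / N)) (Icc 0 (π / 2)) := by
    intro ℓ hℓ
    have := (lt_div_iff₀' hN).mp hℓ.2
    constructor <;> nlinarith [hℓ.1]
  exact fun a ha b hb hab =>
    strictAntiOn_cos_sq (hmaps ha) (hmaps hb) (by dsimp only; gcongr)

/-- The function `g(κ₂) = (−5 + 30κ₂ + √(25 + 36κ₂ + 228κ₂²))/(56κ₂)` for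
`κ₂ ≠ 0`, `g(0) = 3/5`, is continuous and strictly increasing on (−1/2, 1/2) and takes
values in (3/7, 5/7) there. Consequently, for fixed positive integer `N` and `κ₁ > 0`,
the unique critical point `ℓ*(κ₂) ∈ (0, π/N)` of the near-axis curvature model,
characterized by `cos²(N ℓ*(κ₂)/2) = g(κ₂)`, is strictly decreasing on (−1/2, 1/2). -/
theorem critical_point_location_monotone
    (g : ℝ → ℝ)
    (hg0 : g 0 = 3 / 5)
    (hg : ∀ x : ℝ, x ≠ 0 →
      g x = (-5 + 30 * x + Real.sqrt (25 + 36 * x + 228 * x ^ 2)) / (56 * x)) :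
    ContinuousOn g (Set.Ioo (-(1/2) : ℝ) (1/2)) ∧
    StrictMonoOn g (Set.Ioo (-(1/2) : ℝ) (1/2)) ∧
    (∀ x ∈ Set.Ioo (-(1/2) : ℝ) (1/2), 3 / 7 < g x ∧ g x < 5 / 7) ∧
    (∀ (N : ℕ), 0 < N → ∀ (κ₁ : ℝ), 0 < κ₁ → ∀ (ℓs : ℝ → ℝ),
      (∀ x ∈ Set.Ioo (-(1/2) : ℝ) (1/2),
        ℓs x ∈ Set.Ioo (0 : ℝ) (π / (N : ℝ)) ∧
        Real.cos ((N : ℝ) * ℓs x / 2) ^ 2 = g x) →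
      StrictAntiOn ℓs (Set.Ioo (-(1/2) : ℝ) (1/2))) := by
  have hg_eq : EqOn g cosSqOfKappa2 (Ioo (-(1 / 2)) (1 / 2)) := fun x hx => by
    rcases eq_or_ne x 0 with rfl | hx0
    · rw [hg0, cosSqOfKappa2_zero]
    · rw [hg x hx0, cosSqOfKappa2_eq hx.2 hx0]
  have hmono : StrictMonoOn g (Ioo (-(1 / 2)) (1 / 2)) :=
    strictMonoOn_cosSqOfKappa2.congr hg_eq.symm
  refine ⟨(continuousOn_cosSqOfKappa2.mono Ioo_subset_Iio_self).congr hg_eq, hmono,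
    fun x hx => hg_eq hx ▸ cosSqOfKappa2_mem_Ioo hx, ?_⟩
  intro N hN _ _ ℓs hℓs
  exact (strictAntiOn_cos_mul_div_two_sq (Nat.cast_pos.mpr hN)).strictAntiOn_of_comp
    (fun x hx => (hℓs x hx).1) (hmono.congr fun x hx => (hℓs x hx).2.symm)
end

section
/- Let N be a positive integer, κ₁ > 0 and κ₂ ∈ (−1/2, 1/2), and let κ be the near-axis curvature model. Then κ vanishes to exactly second order at ℓ = 0 and to exactly third order at ℓ = π/N: the limit as ℓ → 0 of κ(ℓ)/ℓ² equals κ₁ N² (1 + 2κ₂)/2, which is nonzero, and the limit as ℓ → π/N of κ(ℓ)/(π/N − ℓ)³ equals κ₁ N³ (1 − 2κ₂)/4, which is nonzero. -/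
open Real Set Filter Topology

lemma sin_div_self_tendsto : Tendsto (fun x : ℝ => Real.sin x / x) (𝓝[≠] (0:ℝ)) (𝓝 1) := by
  have h := (Real.hasDerivAt_sin 0)
  rw [hasDerivAt_iff_tendsto_slope] at h
  simp only [Real.cos_zero] at h
  refine h.congr' ?_
  filter_upwards [self_mem_nhdsWithin] with x hx
  simp [slope_def_field, div_eq_div_iff]

/-- The near-axis curvature model vanishes to exactly second order at
`ℓ = 0` and to exactly third order at `ℓ = π/N`:
`κ(ℓ)/ℓ² → κ₁ N² (1 + 2κ₂)/2 ≠ 0` as `ℓ → 0`, and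
`κ(ℓ)/(π/N − ℓ)³ → κ₁ N³ (1 − 2κ₂)/4 ≠ 0` as `ℓ → π/N`. -/
theorem near_axis_curvature_vanishing_orders
    (N : ℕ) (hN : 0 < N) (κ₁ κ₂ : ℝ) (hκ₁ : 0 < κ₁)
    (hκ₂ : κ₂ ∈ Set.Ioo (-(1/2) : ℝ) (1/2))
    (κ : ℝ → ℝ)
    (hκ : ∀ ℓ : ℝ, κ ℓ =
      2 * κ₁ * Real.sin ((N : ℝ) * ℓ / 2) ^ 2 * Real.cos ((N : ℝ) * ℓ / 2) ^ 3 *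
        (1 + 2 * κ₂ * Real.cos ((N : ℝ) * ℓ))) :
    Tendsto (fun ℓ : ℝ => κ ℓ / ℓ ^ 2) (𝓝[≠] 0)
      (𝓝 (κ₁ * (N : ℝ) ^ 2 * (1 + 2 * κ₂) / 2)) ∧
    κ₁ * (N : ℝ) ^ 2 * (1 + 2 * κ₂) / 2 ≠ 0 ∧
    Tendsto (fun ℓ : ℝ => κ ℓ / (π / (N : ℝ) - ℓ) ^ 3) (𝓝[≠] (π / (N : ℝ)))
      (𝓝 (κ₁ * (N : ℝ) ^ 3 * (1 - 2 * κ₂) / 4)) ∧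
    κ₁ * (N : ℝ) ^ 3 * (1 - 2 * κ₂) / 4 ≠ 0 := by
  obtain ⟨hl, hr⟩ := hκ₂
  have hNR : (0:ℝ) < (N:ℝ) := by exact_mod_cast hN
  have hN0 : (N:ℝ) ≠ 0 := ne_of_gt hNR
  have h1pos : (0:ℝ) < 1 + 2 * κ₂ := by linarith
  have h2pos : (0:ℝ) < 1 - 2 * κ₂ := by linarith
  refine ⟨?_, ?_, ?_, ?_⟩
  · -- first limit
    have hmap : Tendsto (fun ℓ : ℝ => (N:ℝ) * ℓ / 2) (𝓝[≠] 0) (𝓝[≠] 0) := by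
      apply tendsto_nhdsWithin_of_tendsto_nhds_of_eventually_within
      · have h : Tendsto (fun ℓ : ℝ => (N:ℝ) * ℓ / 2) (𝓝 0) (𝓝 ((N:ℝ) * 0 / 2)) :=
          Continuous.tendsto (by fun_prop) 0
        exact Tendsto.mono_left (by simpa using h) nhdsWithin_le_nhds
      · filter_upwards [self_mem_nhdsWithin] with x hx
        simp only [mem_compl_iff, mem_singleton_iff] at hx ⊢
        intro h
        rcases mul_eq_zero.1 (by linarith [h] : (N:ℝ) * x = 0) with h' | h'
        · exact hN0 h'
        · exact hx h'
    have hs : Tendsto (fun ℓ : ℝ => Real.sin ((N:ℝ) * ℓ / 2) / ((N:ℝ) * ℓ / 2))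
        (𝓝[≠] 0) (𝓝 1) := sin_div_self_tendsto.comp hmap
    have hc : Tendsto (fun ℓ : ℝ =>
        (N:ℝ)^2 / 4 * (2 * κ₁ * Real.cos ((N:ℝ) * ℓ / 2) ^ 3 * (1 + 2 * κ₂ * Real.cos ((N:ℝ) * ℓ))))
        (𝓝[≠] 0) (𝓝 ((N:ℝ)^2 / 4 * (2 * κ₁ * 1 * (1 + 2 * κ₂ * 1)))) := by
      apply Tendsto.mono_left _ nhdsWithin_le_nhds
      have hcont : Continuous (fun ℓ : ℝ =>
        (N:ℝ)^2 / 4 * (2 * κ₁ * Real.cos ((N:ℝ) * ℓ / 2) ^ 3 * (1 + 2 * κ₂ * Real.cos ((N:ℝ) * ℓ)))) := by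
        fun_prop
      have h := hcont.tendsto 0
      simpa using h
    have hprod := ((hs.pow 2).mul hc)
    have hval : (1:ℝ)^2 * ((N:ℝ)^2 / 4 * (2 * κ₁ * 1 * (1 + 2 * κ₂ * 1)))
        = κ₁ * (N : ℝ) ^ 2 * (1 + 2 * κ₂) / 2 := by ring
    rw [hval] at hprod
    refine hprod.congr' ?_
    filter_upwards [self_mem_nhdsWithin] with x hx
    simp only [mem_compl_iff, mem_singleton_iff] at hx
    rw [hκ x, div_pow]
    have hx2 : x^2 ≠ 0 := pow_ne_zero _ hx
    have hnx2 : ((N:ℝ) * x / 2)^2 ≠ 0 := by positivity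
    field_simp
    ring
  · positivity
  · -- second limit
    have hmap : Tendsto (fun ℓ : ℝ => (N:ℝ) * (π / (N:ℝ) - ℓ) / 2)
        (𝓝[≠] (π / (N:ℝ))) (𝓝[≠] 0) := by
      apply tendsto_nhdsWithin_of_tendsto_nhds_of_eventually_within
      · have h : Tendsto (fun ℓ : ℝ => (N:ℝ) * (π / (N:ℝ) - ℓ) / 2) (𝓝 (π / (N:ℝ)))
            (𝓝 ((N:ℝ) * (π / (N:ℝ) - π / (N:ℝ)) / 2)) :=
          Continuous.tendsto (by fun_prop) _
        exact Tendsto.mono_left (by simpa using h) nhdsWithin_le_nhds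
      · filter_upwards [self_mem_nhdsWithin] with x hx
        simp only [mem_compl_iff, mem_singleton_iff] at hx ⊢
        intro h
        rcases mul_eq_zero.1 (by linarith [h] : (N:ℝ) * (π / (N:ℝ) - x) = 0) with h' | h'
        · exact hN0 h'
        · exact hx (sub_eq_zero.1 h').symm
    have hs : Tendsto (fun ℓ : ℝ =>
        Real.sin ((N:ℝ) * (π / (N:ℝ) - ℓ) / 2) / ((N:ℝ) * (π / (N:ℝ) - ℓ) / 2))
        (𝓝[≠] (π / (N:ℝ))) (𝓝 1) := sin_div_self_tendsto.comp hmap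
    have hc : Tendsto (fun ℓ : ℝ =>
        (N:ℝ)^3 / 8 * (2 * κ₁ * Real.sin ((N:ℝ) * ℓ / 2) ^ 2 * (1 + 2 * κ₂ * Real.cos ((N:ℝ) * ℓ))))
        (𝓝[≠] (π / (N:ℝ)))
        (𝓝 ((N:ℝ)^3 / 8 * (2 * κ₁ * 1 ^ 2 * (1 + 2 * κ₂ * (-1))))) := by
      apply Tendsto.mono_left _ nhdsWithin_le_nhds
      have hcont : Continuous (fun ℓ : ℝ =>
        (N:ℝ)^3 / 8 * (2 * κ₁ * Real.sin ((N:ℝ) * ℓ / 2) ^ 2 * (1 + 2 * κ₂ * Real.cos ((N:ℝ) * ℓ)))) := by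
        fun_prop
      have h := hcont.tendsto (π / (N:ℝ))
      have e1 : (N:ℝ) * (π / (N:ℝ)) / 2 = π / 2 := by field_simp
      have e2 : (N:ℝ) * (π / (N:ℝ)) = π := by field_simp
      rw [e1, e2, Real.sin_pi_div_two, Real.cos_pi] at h
      exact h
    have hprod := (hs.pow 3).mul hc
    have hval : (1:ℝ)^3 * ((N:ℝ)^3 / 8 * (2 * κ₁ * 1 ^ 2 * (1 + 2 * κ₂ * (-1))))
        = κ₁ * (N : ℝ) ^ 3 * (1 - 2 * κ₂) / 4 := by ring
    rw [hval] at hprod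
    refine hprod.congr' ?_
    filter_upwards [self_mem_nhdsWithin] with x hx
    simp only [mem_compl_iff, mem_singleton_iff] at hx
    have hcos : Real.cos ((N:ℝ) * x / 2) = Real.sin ((N:ℝ) * (π / (N:ℝ) - x) / 2) := by
      have h' : (N:ℝ) * (π / (N:ℝ) - x) / 2 = π / 2 - (N:ℝ) * x / 2 := by
        field_simp
      rw [h', Real.sin_pi_div_two_sub]
    rw [hκ x, hcos, div_pow]
    set u : ℝ := π / (N:ℝ) - x with hudef
    have hu : u ≠ 0 := sub_ne_zero.2 (Ne.symm hx)
    have hu3 : u ^ 3 ≠ 0 := pow_ne_zero _ hu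
    have hnu3 : ((N:ℝ) * u / 2) ^ 3 ≠ 0 := by positivity
    field_simp
    ring
  · positivity
end

section
/- Let N be a positive integer and Δ, λ_B real numbers, and let B₀ be the on-axis field-strength model. Then for every real ℓ one has the factorization B₀(ℓ) − B₀(π/N) = Δ (1 + cos(Nℓ))² (1/2 + 4λ_B (1 − cos(Nℓ))). -/
open Real

/-- For the on-axis field-strength model, for every real ℓ,
`B₀(ℓ) − B₀(π/N) = Δ (1 + cos(Nℓ))² (1/2 + 4λ_B (1 − cos(Nℓ)))`. -/
theorem on_axis_field_factorization_min
    (N : ℕ) (hN : 0 < N) (Δ lamB : ℝ)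
    (B₀ : ℝ → ℝ)
    (hB₀ : ∀ ℓ : ℝ, B₀ ℓ = 1 + Δ * ((1 + lamB) * Real.cos ((N : ℝ) * ℓ) +
      (1/4 - 2 * lamB) * Real.cos (2 * (N : ℝ) * ℓ) -
      lamB * Real.cos (3 * (N : ℝ) * ℓ))) :
    ∀ ℓ : ℝ, B₀ ℓ - B₀ (π / (N : ℝ)) =
      Δ * (1 + Real.cos ((N : ℝ) * ℓ)) ^ 2 *
        (1/2 + 4 * lamB * (1 - Real.cos ((N : ℝ) * ℓ))) := by
  intro ℓ
  have hNne : (N : ℝ) ≠ 0 := Nat.cast_ne_zero.mpr hN.ne'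
  have hπ : (N : ℝ) * (π / (N : ℝ)) = π := by field_simp
  rw [hB₀, hB₀]
  rw [show (2 : ℝ) * (N : ℝ) * ℓ = 2 * ((N : ℝ) * ℓ) by ring,
      show (3 : ℝ) * (N : ℝ) * ℓ = 3 * ((N : ℝ) * ℓ) by ring,
      show (2 : ℝ) * (N : ℝ) * (π / (N : ℝ)) = 2 * ((N : ℝ) * (π / N)) by ring,
      show (3 : ℝ) * (N : ℝ) * (π / (N : ℝ)) = 3 * ((N : ℝ) * (π / N)) by ring,
      hπ, Real.cos_two_mul, Real.cos_three_mul, Real.cos_two_mul, Real.cos_three_mul,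
      Real.cos_pi]
  ring
end

section
/- Let N be a positive integer, Δ > 0 and λ_B ∈ (−1/16, 1/8), and let B₀ be the on-axis field-strength model. Then for every real ℓ one has B₀(π/N) ≤ B₀(ℓ) ≤ B₀(0); moreover B₀(ℓ) = B₀(π/N) if and only if cos(Nℓ) = −1, and B₀(ℓ) = B₀(0) if and only if cos(Nℓ) = 1. In particular ℓ = 0 is the global maximum and ℓ = π/N the global minimum of B₀ over a field period, and the mirror ratio satisfies (B₀(0) − B₀(π/N))/2 = Δ exactly. -/
open Real

/-- For the on-axis field-strength model with `Δ > 0` and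
`λ_B ∈ (−1/16, 1/8)`: `B₀(π/N) ≤ B₀(ℓ) ≤ B₀(0)` for all ℓ, with equality at the
minimum iff `cos(Nℓ) = −1` and at the maximum iff `cos(Nℓ) = 1`; and the mirror ratio
satisfies `(B₀(0) − B₀(π/N))/2 = Δ` exactly. -/
theorem on_axis_field_extrema
    (N : ℕ) (hN : 0 < N) (Δ lamB : ℝ) (hΔ : 0 < Δ)
    (hlamB : lamB ∈ Set.Ioo (-(1/16) : ℝ) (1/8))
    (B₀ : ℝ → ℝ)
    (hB₀ : ∀ ℓ : ℝ, B₀ ℓ = 1 + Δ * ((1 + lamB) * Real.cos ((N : ℝ) * ℓ) +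
      (1/4 - 2 * lamB) * Real.cos (2 * (N : ℝ) * ℓ) -
      lamB * Real.cos (3 * (N : ℝ) * ℓ))) :
    (∀ ℓ : ℝ, B₀ (π / (N : ℝ)) ≤ B₀ ℓ ∧ B₀ ℓ ≤ B₀ 0) ∧
    (∀ ℓ : ℝ, B₀ ℓ = B₀ (π / (N : ℝ)) ↔ Real.cos ((N : ℝ) * ℓ) = -1) ∧
    (∀ ℓ : ℝ, B₀ ℓ = B₀ 0 ↔ Real.cos ((N : ℝ) * ℓ) = 1) ∧
    (B₀ 0 - B₀ (π / (N : ℝ))) / 2 = Δ := by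
  obtain ⟨hl1, hl2⟩ := hlamB
  have hNne : ((N : ℝ)) ≠ 0 := Nat.cast_ne_zero.mpr hN.ne'
  -- value at 0
  have hB0 : B₀ 0 = 1 + Δ * (5/4 - 2*lamB) := by
    rw [hB₀]; simp only [mul_zero, Real.cos_zero]; ring
  -- value at π/N
  have hNpi : (N : ℝ) * (π / (N : ℝ)) = π := by field_simp
  have hcos3π : Real.cos (3 * π) = -1 := by
    rw [show (3:ℝ) * π = 2*π + π by ring, Real.cos_add]; simp
  have hBπ : B₀ (π / (N : ℝ)) = 1 + Δ * (-(3/4) - 2*lamB) := by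
    rw [hB₀, show (2:ℝ) * (N:ℝ) * (π / (N : ℝ)) = 2 * ((N:ℝ) * (π / (N:ℝ))) by ring,
      show (3:ℝ) * (N:ℝ) * (π / (N : ℝ)) = 3 * ((N:ℝ) * (π / (N:ℝ))) by ring, hNpi,
      Real.cos_pi, Real.cos_two_pi, hcos3π]
    ring
  -- B₀ in terms of c = cos(Nℓ)
  have hBc : ∀ ℓ : ℝ, B₀ ℓ = 1 + Δ * ((1 + lamB) * Real.cos ((N:ℝ)*ℓ) +
      (1/4 - 2*lamB) * (2*(Real.cos ((N:ℝ)*ℓ))^2 - 1) -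
      lamB * (4*(Real.cos ((N:ℝ)*ℓ))^3 - 3*Real.cos ((N:ℝ)*ℓ))) := by
    intro ℓ
    rw [hB₀, show (2:ℝ) * (N:ℝ) * ℓ = 2 * ((N:ℝ) * ℓ) by ring,
      show (3:ℝ) * (N:ℝ) * ℓ = 3 * ((N:ℝ) * ℓ) by ring,
      Real.cos_two_mul, Real.cos_three_mul]
  -- key positivity facts
  have keyM : ∀ c : ℝ, -1 ≤ c → c ≤ 1 → (0:ℝ) < 1/2 + 4*lamB*(1-c) := by
    intro c h1 h2
    rcases le_or_gt 0 lamB with h | h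
    · nlinarith
    · nlinarith
  have keyG : ∀ c : ℝ, -1 ≤ c → c ≤ 1 →
      (0:ℝ) < -4*lamB*c^2 + (1/2 - 8*lamB)*c + 3/2 - 4*lamB := by
    intro c h1 h2
    nlinarith [mul_nonneg (sub_nonneg.2 h2) (by linarith : (0:ℝ) ≤ 1 + c),
      mul_nonneg (mul_nonneg (sub_nonneg.2 h2) (by linarith : (0:ℝ) ≤ 1 + c))
        (by linarith : (0:ℝ) ≤ 1/8 - lamB),
      mul_nonneg (mul_nonneg (sub_nonneg.2 h2) (by linarith : (0:ℝ) ≤ 1 + c))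
        (by linarith : (0:ℝ) ≤ lamB + 1/16)]
  refine ⟨?_, ?_, ?_, ?_⟩
  · intro ℓ
    set c := Real.cos ((N:ℝ)*ℓ) with hc
    have h1 : -1 ≤ c := Real.neg_one_le_cos _
    have h2 : c ≤ 1 := Real.cos_le_one _
    have hM := keyM c h1 h2
    have hG := keyG c h1 h2
    constructor
    · rw [hBπ, hBc ℓ, ← hc]
      nlinarith [mul_nonneg (mul_nonneg hΔ.le (sq_nonneg (1+c))) hM.le]
    · rw [hB0, hBc ℓ, ← hc]
      nlinarith [mul_nonneg (mul_nonneg hΔ.le (by linarith : (0:ℝ) ≤ 1 - c)) hG.le]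
  · intro ℓ
    set c := Real.cos ((N:ℝ)*ℓ) with hc
    have h1 : -1 ≤ c := Real.neg_one_le_cos _
    have h2 : c ≤ 1 := Real.cos_le_one _
    have hM := keyM c h1 h2
    rw [hBπ, hBc ℓ, ← hc]
    constructor
    · intro h
      have hX : Δ * ((1+c)^2 * (1/2 + 4*lamB*(1-c))) = 0 := by linear_combination h
      have h0 : (1+c)^2 * (1/2 + 4*lamB*(1-c)) = 0 :=
        (mul_eq_zero.1 hX).resolve_left hΔ.ne'
      have h00 : (1+c)^2 = 0 := (mul_eq_zero.1 h0).resolve_right hM.ne'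
      have : 1 + c = 0 := by
        have := sq_eq_zero_iff.1 h00
        exact this
      linarith
    · intro h
      rw [h]; ring
  · intro ℓ
    set c := Real.cos ((N:ℝ)*ℓ) with hc
    have h1 : -1 ≤ c := Real.neg_one_le_cos _
    have h2 : c ≤ 1 := Real.cos_le_one _
    have hG := keyG c h1 h2
    rw [hB0, hBc ℓ, ← hc]
    constructor
    · intro h
      have hX : Δ * ((1-c) * (-4*lamB*c^2 + (1/2 - 8*lamB)*c + 3/2 - 4*lamB)) = 0 := by
        linear_combination -h
      have h0 : (1-c) * (-4*lamB*c^2 + (1/2 - 8*lamB)*c + 3/2 - 4*lamB) = 0 :=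
        (mul_eq_zero.1 hX).resolve_left hΔ.ne'
      have h00 : (1:ℝ) - c = 0 := (mul_eq_zero.1 h0).resolve_right hG.ne'
      linarith
    · intro h
      rw [h]; ring
  · rw [hB0, hBπ]; ring
end

section
/- Let u and v be positive integers with 2v > u, let φ₀ be a real number, and let b, e, B₀ : ℝ → ℝ be continuously differentiable with b(φ₀) ≠ 0. Suppose B₀′(φ) = (φ − φ₀)^{u−1} b(φ) for all φ, and set d(φ) = (φ − φ₀)^v e(φ). Then the precession term T(φ), defined for φ ≠ φ₀ near φ₀, tends to 0 as φ → φ₀. In other words, at a flattening point where B₀′ vanishes to order u − 1 and d vanishes to order v with 2v − u > 0, the term T = (B₀² d²/B₀′)′/4 behaves like (φ − φ₀)^{2v−u} and vanishes at φ₀. -/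
open Filter Topology

/-!
Away from `φ₀` the bracket `B₀² d² / B₀′` equals `(φ - φ₀)^k g(φ)` with `k = 2v - (u - 1) ≥ 2` and
`g = B₀² e² / b`, which is `C¹` near `φ₀` because `b(φ₀) ≠ 0`. Its derivative
`k (φ - φ₀)^(k-1) g + (φ - φ₀)^k g′` extends continuously to `φ₀` with value `0`.
-/

theorem tendsto_deriv_nhdsNE_zero_of_eventuallyEq_sub_pow_mul {F g : ℝ → ℝ} {a : ℝ} {k : ℕ}
    (hk : 2 ≤ k) (hg : ContDiffAt ℝ 1 g a) (hF : F =ᶠ[𝓝[≠] a] fun x => (x - a) ^ k * g x) :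
    Tendsto (deriv F) (𝓝[≠] a) (𝓝 0) := by
  set L : ℝ → ℝ := fun x => k * (x - a) ^ (k - 1) * g x + (x - a) ^ k * deriv g x
  have hg_diff : ∀ᶠ x in 𝓝[≠] a, DifferentiableAt ℝ g x :=
    nhdsWithin_le_nhds ((hg.eventually (by simp)).mono fun x hx => hx.differentiableAt_one)
  have hF_deriv : deriv F =ᶠ[𝓝[≠] a] L := by
    filter_upwards [eventually_eventually_nhdsWithin.2 hF, hg_diff, self_mem_nhdsWithin]
      with x hFx hgx hxa
    rw [isOpen_compl_singleton.nhdsWithin_eq hxa] at hFx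
    have hpow : HasDerivAt (fun y => (y - a) ^ k) (k * (x - a) ^ (k - 1)) x := by
      simpa using ((hasDerivAt_id x).sub_const a).fun_pow k
    have hprod : HasDerivAt (fun y => (y - a) ^ k * g y) (L x) x := hpow.fun_mul hgx.hasDerivAt
    rw [EventuallyEq.deriv_eq hFx, hprod.deriv]
  have hL_cont : ContinuousAt L a := by
    have := hg.continuousAt
    have := (hg.derivWithin (m := 0) (by norm_num)).continuousAt
    fun_prop
  have hL_zero : L a = 0 := by
    simp [L, zero_pow (by omega : k - 1 ≠ 0), zero_pow (by omega : k ≠ 0)]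
  rw [← hL_zero]
  exact hL_cont.continuousWithinAt.tendsto.congr' hF_deriv.symm

theorem precession_term_vanishes_at_flattening_general
    (u v : ℕ) (huv : u < 2 * v)
    (φ₀ : ℝ) (b e B₀ : ℝ → ℝ)
    (hb : ContDiff ℝ 1 b) (he : ContDiff ℝ 1 e) (hB₀ : ContDiff ℝ 1 B₀)
    (hbφ₀ : b φ₀ ≠ 0)
    (hB₀' : ∀ φ : ℝ, deriv B₀ φ = (φ - φ₀) ^ (u - 1) * b φ)
    (d : ℝ → ℝ) (hd : ∀ φ : ℝ, d φ = (φ - φ₀) ^ v * e φ)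
    (T : ℝ → ℝ)
    (hT : ∀ ψ : ℝ, T ψ =
      (1/4) * deriv (fun x : ℝ => (B₀ x) ^ 2 * (d x) ^ 2 / deriv B₀ x) ψ) :
    Tendsto T (𝓝[≠] φ₀) (𝓝 0) := by
  set k := 2 * v - (u - 1)
  have hg : ContDiffAt ℝ 1 (fun x => B₀ x ^ 2 * e x ^ 2 / b x) φ₀ :=
    ((hB₀.pow 2).mul (he.pow 2)).contDiffAt.div hb.contDiffAt hbφ₀
  have hbracket : (fun x => B₀ x ^ 2 * d x ^ 2 / deriv B₀ x)
      =ᶠ[𝓝[≠] φ₀] fun x => (x - φ₀) ^ k * (B₀ x ^ 2 * e x ^ 2 / b x) := by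
    filter_upwards [self_mem_nhdsWithin] with x hx
    have hnum : B₀ x ^ 2 * d x ^ 2
        = (x - φ₀) ^ (u - 1) * ((x - φ₀) ^ k * (B₀ x ^ 2 * e x ^ 2)) := by
      rw [hd, ← mul_assoc, ← pow_add, show u - 1 + k = 2 * v by omega]
      ring
    rw [hnum, hB₀', mul_div_mul_left _ _ (pow_ne_zero _ (sub_ne_zero.2 hx)), mul_div_assoc]
  have hlim := (tendsto_deriv_nhdsNE_zero_of_eventuallyEq_sub_pow_mul (by omega) hg
    hbracket).const_mul (1 / 4)
  rw [mul_zero] at hlim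
  exact hlim.congr fun ψ => (hT ψ).symm

/-- If `B₀′(φ) = (φ − φ₀)^{u−1} b(φ)` with `b(φ₀) ≠ 0`,
`d(φ) = (φ − φ₀)^v e(φ)`, and `2v > u` (u, v positive integers, b, e, B₀ C¹), then the
precession term `T(φ) = (1/4) d/dφ [B₀² d²/B₀′](φ)` tends to 0 as `φ → φ₀`. -/
theorem precession_term_vanishes_at_flattening
    (u v : ℕ) (hu : 0 < u) (hv : 0 < v) (huv : u < 2 * v)
    (φ₀ : ℝ) (b e B₀ : ℝ → ℝ)
    (hb : ContDiff ℝ 1 b) (he : ContDiff ℝ 1 e) (hB₀ : ContDiff ℝ 1 B₀)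
    (hbφ₀ : b φ₀ ≠ 0)
    (hB₀' : ∀ φ : ℝ, deriv B₀ φ = (φ - φ₀) ^ (u - 1) * b φ)
    (d : ℝ → ℝ) (hd : ∀ φ : ℝ, d φ = (φ - φ₀) ^ v * e φ)
    (T : ℝ → ℝ)
    (hT : ∀ ψ : ℝ, T ψ =
      (1/4) * deriv (fun x : ℝ => (B₀ x) ^ 2 * (d x) ^ 2 / deriv B₀ x) ψ) :
    Tendsto T (𝓝[≠] φ₀) (𝓝 0) :=
  precession_term_vanishes_at_flattening_general u v huv φ₀ b e B₀ hb he hB₀ hbφ₀ hB₀' d hd T hT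
end

section
/- Let k and v be positive integers with v > k, let φ₀ be a real number, and let b, e, B₀ : ℝ → ℝ be continuously differentiable with b(φ₀) > 0 and e(φ₀) ≠ 0 and B₀(φ₀) ≠ 0. Suppose B₀′(φ) = (φ − φ₀)^{2k−1} b(φ) for all φ (so φ₀ is a local minimum of B₀), and set d(φ) = (φ − φ₀)^v e(φ). Then there exists δ > 0 such that the precession term satisfies T(φ) > 0 for all φ with 0 < |φ − φ₀| < δ. If instead b(φ₀) < 0 (so φ₀ is a local maximum of B₀), then there exists δ > 0 such that T(φ) < 0 for all φ with 0 < |φ − φ₀| < δ. -/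
/-!
Since `B₀′ = (φ - φ₀)^(2k-1) b` and `d = (φ - φ₀)^v e`, the function differentiated in `T` is
`(φ - φ₀)^(2(v-k)+1) g` with `g = B₀² e² / b`, which is `C¹` near `φ₀` and has the sign of `b(φ₀)`
there. Its derivative is `(φ - φ₀)^(2(v-k)) ((2(v-k)+1) g + (φ - φ₀) g')`: an even power, positive
off `φ₀`, times a factor tending to `(2(v-k)+1) g(φ₀)`.
-/

open Filter Topology

-- At `t = 0` or `β = 0` both sides are `0`, through `x / 0 = 0`.
theorem pow_two_mul_mul_div_pow_mul {k v : ℕ} (hk : 0 < k) (hkv : k ≤ v) (t c β : ℝ) :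
    t ^ (2 * v) * c / (t ^ (2 * k - 1) * β) = t ^ (2 * (v - k) + 1) * (c / β) := by
  rcases eq_or_ne t 0 with rfl | ht
  · simp [zero_pow (by omega : 2 * k - 1 ≠ 0)]
  · have hsplit : t ^ (2 * v) = t ^ (2 * k - 1) * t ^ (2 * (v - k) + 1) := by
      rw [← pow_add]; congr 1; omega
    rw [hsplit, mul_assoc, mul_div_mul_left _ _ (pow_ne_zero _ ht), mul_div_assoc]

theorem hasDerivAt_sub_pow_succ_mul {g : ℝ → ℝ} {g' a x : ℝ} (n : ℕ) (hg : HasDerivAt g g' x) :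
    HasDerivAt (fun y => (y - a) ^ (n + 1) * g y)
      ((x - a) ^ n * ((n + 1) * g x + (x - a) * g')) x := by
  refine (((hasDerivAt_id x).sub_const a).fun_pow (n + 1)).fun_mul hg |>.congr_deriv ?_
  simp only [id_eq, mul_one, Nat.cast_add, Nat.cast_one, add_tsub_cancel_right]
  ring

theorem eventually_pos_deriv_sub_pow_odd_mul {g : ℝ → ℝ} {a : ℝ} (n : ℕ)
    (hg : ContDiffAt ℝ 1 g a) (hga : 0 < g a) :
    ∀ᶠ x in 𝓝[≠] a, 0 < deriv (fun y => (y - a) ^ (2 * n + 1) * g y) x := by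
  set P : ℝ → ℝ := fun x => (2 * n + 1) * g x + (x - a) * deriv g x
  have hP : ContinuousAt P a := by
    have hg'c := (hg.derivWithin (m := 0) le_rfl).continuousAt
    have hgc := hg.continuousAt
    fun_prop
  have hPa : 0 < P a := by
    simp only [P, sub_self, zero_mul, add_zero]
    positivity
  have hderiv : ∀ᶠ x in 𝓝 a, deriv (fun y => (y - a) ^ (2 * n + 1) * g y) x
      = (x - a) ^ (2 * n) * P x := by
    filter_upwards [hg.eventually (by simp)] with x hx
    have := (hasDerivAt_sub_pow_succ_mul (a := a) (2 * n)
      (hx.differentiableAt one_ne_zero).hasDerivAt).deriv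
    simpa [P] using this
  filter_upwards [nhdsWithin_le_nhds (hP.eventually (eventually_gt_nhds hPa)),
    nhdsWithin_le_nhds hderiv, self_mem_nhdsWithin] with x hPx hx hxa
  rw [hx]
  exact mul_pos ((even_two_mul n).pow_pos (sub_ne_zero.2 hxa)) hPx

theorem eventually_deriv_sub_pow_odd_mul_neg {g : ℝ → ℝ} {a : ℝ} (n : ℕ)
    (hg : ContDiffAt ℝ 1 g a) (hga : g a < 0) :
    ∀ᶠ x in 𝓝[≠] a, deriv (fun y => (y - a) ^ (2 * n + 1) * g y) x < 0 := by
  filter_upwards [eventually_pos_deriv_sub_pow_odd_mul n hg.neg (neg_pos.2 hga)] with x hx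
  simpa only [Pi.neg_apply, mul_neg, deriv.fun_neg', neg_pos] using hx

theorem exists_pos_forall_of_eventually_nhdsNE {p : ℝ → Prop} {a : ℝ}
    (h : ∀ᶠ x in 𝓝[≠] a, p x) : ∃ δ > 0, ∀ x, 0 < |x - a| → |x - a| < δ → p x := by
  obtain ⟨δ, hδ, hball⟩ := Metric.mem_nhdsWithin_iff.1 h
  refine ⟨δ, hδ, fun x hpos hlt => hball ⟨by rwa [Metric.mem_ball, Real.dist_eq], ?_⟩⟩
  simpa [sub_eq_zero] using hpos.ne'

theorem precession_term_sign_near_extremum_general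
    (k v : ℕ) (hk : 0 < k) (hkv : k < v)
    (φ₀ : ℝ) (b e B₀ : ℝ → ℝ)
    (hb : ContDiff ℝ 1 b) (he : ContDiff ℝ 1 e) (hB₀ : ContDiff ℝ 1 B₀)
    (heφ₀ : e φ₀ ≠ 0) (hB₀φ₀ : B₀ φ₀ ≠ 0)
    (hB₀' : ∀ φ : ℝ, deriv B₀ φ = (φ - φ₀) ^ (2 * k - 1) * b φ)
    (d : ℝ → ℝ) (hd : ∀ φ : ℝ, d φ = (φ - φ₀) ^ v * e φ)
    (T : ℝ → ℝ)
    (hT : ∀ ψ : ℝ, T ψ =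
      (1/4) * deriv (fun x : ℝ => (B₀ x) ^ 2 * (d x) ^ 2 / deriv B₀ x) ψ) :
    (0 < b φ₀ → ∃ δ > (0 : ℝ), ∀ φ : ℝ,
      0 < |φ - φ₀| → |φ - φ₀| < δ → 0 < T φ) ∧
    (b φ₀ < 0 → ∃ δ > (0 : ℝ), ∀ φ : ℝ,
      0 < |φ - φ₀| → |φ - φ₀| < δ → T φ < 0) := by
  set g : ℝ → ℝ := fun x => B₀ x ^ 2 * e x ^ 2 / b x
  have hF : (fun x : ℝ => (B₀ x) ^ 2 * (d x) ^ 2 / deriv B₀ x)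
      = fun x => (x - φ₀) ^ (2 * (v - k) + 1) * g x := by
    funext x
    rw [hd, hB₀', ← pow_two_mul_mul_div_pow_mul hk hkv.le]
    ring
  have hg (h : b φ₀ ≠ 0) : ContDiffAt ℝ 1 g φ₀ :=
    ((hB₀.contDiffAt.pow 2).mul (he.contDiffAt.pow 2)).div hb.contDiffAt h
  simp only [hF] at hT
  refine ⟨fun hpos => ?_, fun hneg => ?_⟩
  · have hga : 0 < g φ₀ := div_pos (by positivity) hpos
    refine exists_pos_forall_of_eventually_nhdsNE ?_
    filter_upwards [eventually_pos_deriv_sub_pow_odd_mul (v - k) (hg hpos.ne') hga] with φ hφ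
    rw [hT]
    positivity
  · have hga : g φ₀ < 0 := div_neg_of_pos_of_neg (by positivity) hneg
    refine exists_pos_forall_of_eventually_nhdsNE ?_
    filter_upwards [eventually_deriv_sub_pow_odd_mul_neg (v - k) (hg hneg.ne) hga] with φ hφ
    rw [hT]
    linarith

/-- If `B₀′(φ) = (φ − φ₀)^{2k−1} b(φ)` with `v > k` positive integers,
`e(φ₀) ≠ 0`, `B₀(φ₀) ≠ 0`, and `d(φ) = (φ − φ₀)^v e(φ)` (b, e, B₀ C¹), then:
if `b(φ₀) > 0` (local minimum of B₀) the precession term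
`T(φ) = (1/4) d/dφ [B₀² d²/B₀′](φ)` is positive on a punctured neighborhood of φ₀;
if `b(φ₀) < 0` (local maximum) it is negative on a punctured neighborhood of φ₀. -/
theorem precession_term_sign_near_extremum
    (k v : ℕ) (hk : 0 < k) (hv : 0 < v) (hkv : k < v)
    (φ₀ : ℝ) (b e B₀ : ℝ → ℝ)
    (hb : ContDiff ℝ 1 b) (he : ContDiff ℝ 1 e) (hB₀ : ContDiff ℝ 1 B₀)
    (heφ₀ : e φ₀ ≠ 0) (hB₀φ₀ : B₀ φ₀ ≠ 0)
    (hB₀' : ∀ φ : ℝ, deriv B₀ φ = (φ - φ₀) ^ (2 * k - 1) * b φ)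
    (d : ℝ → ℝ) (hd : ∀ φ : ℝ, d φ = (φ - φ₀) ^ v * e φ)
    (T : ℝ → ℝ)
    (hT : ∀ ψ : ℝ, T ψ =
      (1/4) * deriv (fun x : ℝ => (B₀ x) ^ 2 * (d x) ^ 2 / deriv B₀ x) ψ) :
    (0 < b φ₀ → ∃ δ > (0 : ℝ), ∀ φ : ℝ,
      0 < |φ - φ₀| → |φ - φ₀| < δ → 0 < T φ) ∧
    (b φ₀ < 0 → ∃ δ > (0 : ℝ), ∀ φ : ℝ,
      0 < |φ - φ₀| → |φ - φ₀| < δ → T φ < 0) :=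
  precession_term_sign_near_extremum_general k v hk hkv φ₀ b e B₀ hb he hB₀ heφ₀ hB₀φ₀ hB₀' d hd T
    hT
end
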